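/- Ellipsoidal enclosure of an intersection (fusion; Proposition 2, part 2): Let q₁, q₂ ∈ ℝⁿ and let Q₁, Q₂ be positive definite n×n matrices. Let κ₁, κ₂ ≥ 0 with κ₁ + κ₂ > 0, and define Q̃ = (κ₁ Q₁⁻¹ + κ₂ Q₂⁻¹)⁻¹ and q̃ = Q̃ (κ₁ Q₁⁻¹ q₁ + κ₂ Q₂⁻¹ q₂). If 1 = κ₁ (1 − q₁ᵀ Q₁⁻¹ q₁) + κ₂ (1 − q₂ᵀ Q₂⁻¹ q₂) + q̃ᵀ Q̃⁻¹ q̃, then E(q₁, Q₁) ∩ E(q₂, Q₂) ⊆ E(q̃, Q̃). -/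

import Mathlib

open Matrix

noncomputable section

open scoped ComplexOrder in
/-- The square root of a positive semidefinite matrix, as defined in the older Mathlib
(`Matrix.PosSemidef.sqrt`, since removed). -/
def Matrix.PosSemidef.sqrt {n 𝕜 : Type*} [Fintype n] [RCLike 𝕜] [DecidableEq n]
    {A : Matrix n n 𝕜} (hA : A.PosSemidef) : Matrix n n 𝕜 :=
  hA.1.eigenvectorUnitary.1 * diagonal ((↑) ∘ (√·) ∘ hA.1.eigenvalues) *
    (star hA.1.eigenvectorUnitary : Matrix n n 𝕜)

/-- The ellipsoid `E(q, Q) = { q + Q^{1/2} v : vᵀv ≤ 1 }` with center `q` and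
positive semidefinite shape matrix `Q` (empty if `Q` is not positive
semidefinite). -/
def ellipsoid {n : ℕ} (q : Fin n → ℝ) (Q : Matrix (Fin n) (Fin n) ℝ) :
    Set (Fin n → ℝ) :=
  {x | ∃ hQ : Q.PosSemidef, ∃ v : Fin n → ℝ, v ⬝ᵥ v ≤ 1 ∧ x = q + hQ.sqrt *ᵥ v}

lemma sqrt_posSemidef_aux {n : ℕ} {A : Matrix (Fin n) (Fin n) ℝ} (hA : A.PosSemidef) :
    hA.sqrt.PosSemidef := by
  unfold Matrix.PosSemidef.sqrt
  have hD : (diagonal ((↑) ∘ (√·) ∘ hA.1.eigenvalues) : Matrix (Fin n) (Fin n) ℝ).PosSemidef := by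
    rw [posSemidef_diagonal_iff]; intro i; simp [Real.sqrt_nonneg]
  exact hD.mul_mul_conjTranspose_same _

lemma sqrt_mul_self_aux {n : ℕ} {A : Matrix (Fin n) (Fin n) ℝ} (hA : A.PosSemidef) :
    hA.sqrt * hA.sqrt = A := by
  unfold Matrix.PosSemidef.sqrt
  conv_rhs => rw [hA.1.spectral_theorem]
  rw [Unitary.conjStarAlgAut_apply]
  have hUU : (star hA.1.eigenvectorUnitary : Matrix (Fin n) (Fin n) ℝ) * (hA.1.eigenvectorUnitary : Matrix (Fin n) (Fin n) ℝ) = 1 :=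
    Unitary.coe_star_mul_self _
  rw [show ∀ (U V D : Matrix (Fin n) (Fin n) ℝ), U * D * V * (U * D * V) = U * (D * (V * U) * D) * V by
    intros; simp only [mul_assoc]]
  rw [hUU, Matrix.mul_one, diagonal_mul_diagonal]
  congr 2
  ext i j
  simp only [diagonal_apply]
  split_ifs with h
  · subst h; simp [Real.mul_self_sqrt (hA.eigenvalues_nonneg i)]
  · rfl

lemma mulVec_dot {n : ℕ} (M : Matrix (Fin n) (Fin n) ℝ) (u w : Fin n → ℝ) :
    (M *ᵥ u) ⬝ᵥ w = u ⬝ᵥ (Mᵀ *ᵥ w) := by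
  rw [dotProduct_comm, dotProduct_mulVec, ← mulVec_transpose, dotProduct_comm]

lemma herm_comm {n : ℕ} {M : Matrix (Fin n) (Fin n) ℝ} (hM : M.IsHermitian)
    (u w : Fin n → ℝ) : u ⬝ᵥ (M *ᵥ w) = w ⬝ᵥ (M *ᵥ u) := by
  have ht : Mᵀ = M := by
    rw [← conjTranspose_eq_transpose_of_trivial]; exact hM.eq
  rw [dotProduct_mulVec, ← mulVec_transpose, ht, dotProduct_comm]

lemma sqrt_posDef {n : ℕ} {Q : Matrix (Fin n) (Fin n) ℝ} (hQ : Q.PosDef) :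
    (hQ.posSemidef.sqrt).PosDef := by
  set S := hQ.posSemidef.sqrt with hS
  have hpsd : S.PosSemidef := sqrt_posSemidef_aux hQ.posSemidef
  refine PosDef.of_dotProduct_mulVec_pos hpsd.1 (fun x hx => ?_)
  rcases lt_or_eq_of_le (hpsd.dotProduct_mulVec_nonneg x) with h | h
  · exact h
  · exfalso
    have h0 : S *ᵥ x = 0 := (hpsd.dotProduct_mulVec_zero_iff x).mp h.symm
    have : Q *ᵥ x = 0 := by
      rw [← sqrt_mul_self_aux hQ.posSemidef, ← mulVec_mulVec, h0, mulVec_zero]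
    have hc := hQ.dotProduct_mulVec_pos hx
    rw [this, dotProduct_zero] at hc
    exact lt_irrefl 0 hc

theorem mem_ellipsoid_iff {n : ℕ} (q x : Fin n → ℝ) {Q : Matrix (Fin n) (Fin n) ℝ}
    (hQ : Q.PosDef) :
    x ∈ ellipsoid q Q ↔ (x - q) ⬝ᵥ (Q⁻¹ *ᵥ (x - q)) ≤ 1 := by
  set S := hQ.posSemidef.sqrt with hSdef
  have hSpd : S.PosDef := sqrt_posDef hQ
  have hSdet : IsUnit S.det := isUnit_iff_ne_zero.2 hSpd.det_pos.ne'
  have hSS : S * S = Q := sqrt_mul_self_aux hQ.posSemidef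
  have hSt : Sᵀ = S := by
    rw [← conjTranspose_eq_transpose_of_trivial]; exact hSpd.isHermitian.eq
  have hQinv : Q⁻¹ = S⁻¹ * S⁻¹ := by rw [← hSS, Matrix.mul_inv_rev]
  constructor
  · rintro ⟨_, v, hv, rfl⟩
    have hd : q + S *ᵥ v - q = S *ᵥ v := by abel
    rw [hd, mulVec_dot, hSt, mulVec_mulVec, mulVec_mulVec]
    have : S * Q⁻¹ * S = 1 := by
      rw [hQinv, ← mul_assoc, Matrix.mul_nonsing_inv _ hSdet,
        Matrix.one_mul, Matrix.nonsing_inv_mul _ hSdet]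
    rw [this, one_mulVec]
    exact hv
  · intro h
    refine ⟨hQ.posSemidef, S⁻¹ *ᵥ (x - q), ?_, ?_⟩
    · have hStinv : (S⁻¹)ᵀ = S⁻¹ := by rw [transpose_nonsing_inv, hSt]
      rw [mulVec_dot, hStinv, mulVec_mulVec, ← hQinv]
      exact h
    · rw [mulVec_mulVec, Matrix.mul_nonsing_inv _ hSdet, one_mulVec]
      abel

/-- **Ellipsoidal enclosure of an intersection (fusion; Proposition 2,
part 2).**  With `Q̃ = (κ₁Q₁⁻¹ + κ₂Q₂⁻¹)⁻¹` and
`q̃ = Q̃(κ₁Q₁⁻¹q₁ + κ₂Q₂⁻¹q₂)`, if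
`1 = κ₁(1 − q₁ᵀQ₁⁻¹q₁) + κ₂(1 − q₂ᵀQ₂⁻¹q₂) + q̃ᵀQ̃⁻¹q̃`, then
`E(q₁,Q₁) ∩ E(q₂,Q₂) ⊆ E(q̃,Q̃)`. -/
theorem ellipsoid_fusion_subset
    {n : ℕ} (q₁ q₂ : Fin n → ℝ) (Q₁ Q₂ : Matrix (Fin n) (Fin n) ℝ)
    (hQ₁ : Q₁.PosDef) (hQ₂ : Q₂.PosDef)
    (κ₁ κ₂ : ℝ) (hκ₁ : 0 ≤ κ₁) (hκ₂ : 0 ≤ κ₂) (hκ : 0 < κ₁ + κ₂)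
    (Qt : Matrix (Fin n) (Fin n) ℝ) (qt : Fin n → ℝ)
    (hQt : Qt = (κ₁ • Q₁⁻¹ + κ₂ • Q₂⁻¹)⁻¹)
    (hqt : qt = Qt *ᵥ (κ₁ • (Q₁⁻¹ *ᵥ q₁) + κ₂ • (Q₂⁻¹ *ᵥ q₂)))
    (hnorm : 1 = κ₁ * (1 - q₁ ⬝ᵥ (Q₁⁻¹ *ᵥ q₁)) + κ₂ * (1 - q₂ ⬝ᵥ (Q₂⁻¹ *ᵥ q₂))
      + qt ⬝ᵥ (Qt⁻¹ *ᵥ qt)) :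
    ellipsoid q₁ Q₁ ∩ ellipsoid q₂ Q₂ ⊆ ellipsoid qt Qt := by
  intro x hx
  obtain ⟨hx₁, hx₂⟩ := hx
  have hQ₁i : (Q₁⁻¹).PosDef := hQ₁.inv
  have hQ₂i : (Q₂⁻¹).PosDef := hQ₂.inv
  have hf₁ := (mem_ellipsoid_iff q₁ x hQ₁).mp hx₁
  have hf₂ := (mem_ellipsoid_iff q₂ x hQ₂).mp hx₂
  set A := κ₁ • Q₁⁻¹ + κ₂ • Q₂⁻¹ with hA
  have hApd : A.PosDef := by
    refine PosDef.of_dotProduct_mulVec_pos ?_ (fun y hy => ?_)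
    · show Aᴴ = A
      rw [hA, conjTranspose_add, conjTranspose_smul, conjTranspose_smul,
        hQ₁i.isHermitian.eq, hQ₂i.isHermitian.eq, star_trivial, star_trivial]
    · have h1 := hQ₁i.dotProduct_mulVec_pos hy
      have h2 := hQ₂i.dotProduct_mulVec_pos hy
      simp only [star_trivial] at h1 h2 ⊢
      simp only [hA, add_mulVec, smul_mulVec, dotProduct_add, dotProduct_smul,
        smul_eq_mul]
      rcases lt_or_ge 0 κ₁ with h | h
      · nlinarith
      · have hz : κ₁ = 0 := le_antisymm h hκ₁
        have : 0 < κ₂ := by linarith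
        nlinarith
  have hAdet : IsUnit A.det := isUnit_iff_ne_zero.2 hApd.det_pos.ne'
  have hQtA : Qt⁻¹ = A := by rw [hQt, Matrix.nonsing_inv_nonsing_inv _ hAdet]
  have hQtpd : Qt.PosDef := hQt ▸ hApd.inv
  have hAqt : A *ᵥ qt = κ₁ • (Q₁⁻¹ *ᵥ q₁) + κ₂ • (Q₂⁻¹ *ᵥ q₂) := by
    rw [hqt, hQt, mulVec_mulVec, Matrix.mul_nonsing_inv _ hAdet, one_mulVec]
  rw [mem_ellipsoid_iff qt x hQtpd]
  have expand : ∀ (M : Matrix (Fin n) (Fin n) ℝ), M.IsHermitian → ∀ u w : Fin n → ℝ,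
      (u - w) ⬝ᵥ (M *ᵥ (u - w))
        = u ⬝ᵥ (M *ᵥ u) - 2 * (u ⬝ᵥ (M *ᵥ w)) + w ⬝ᵥ (M *ᵥ w) := by
    intro M hM u w
    simp only [mulVec_sub, sub_dotProduct, dotProduct_sub]
    rw [herm_comm hM w u]
    ring
  rw [hQtA] at hnorm ⊢
  rw [expand _ hApd.isHermitian]
  rw [expand _ hQ₁i.isHermitian] at hf₁
  rw [expand _ hQ₂i.isHermitian] at hf₂
  have hx_A : x ⬝ᵥ (A *ᵥ x) = κ₁ * (x ⬝ᵥ (Q₁⁻¹ *ᵥ x)) + κ₂ * (x ⬝ᵥ (Q₂⁻¹ *ᵥ x)) := by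
    simp [hA, add_mulVec, smul_mulVec, dotProduct_add, dotProduct_smul, smul_eq_mul]
  have hxb : x ⬝ᵥ (A *ᵥ qt) = κ₁ * (x ⬝ᵥ (Q₁⁻¹ *ᵥ q₁)) + κ₂ * (x ⬝ᵥ (Q₂⁻¹ *ᵥ q₂)) := by
    rw [hAqt]; simp [dotProduct_add, dotProduct_smul, smul_eq_mul]
  have ht₁ : x ⬝ᵥ (Q₁⁻¹ *ᵥ q₁) = q₁ ⬝ᵥ (Q₁⁻¹ *ᵥ x) := herm_comm hQ₁i.isHermitian x q₁
  have ht₂ : x ⬝ᵥ (Q₂⁻¹ *ᵥ q₂) = q₂ ⬝ᵥ (Q₂⁻¹ *ᵥ x) := herm_comm hQ₂i.isHermitian x q₂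
  nlinarith [mul_nonneg hκ₁ (sub_nonneg.2 hf₁), mul_nonneg hκ₂ (sub_nonneg.2 hf₂)]

end
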